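/- For every z ∈ Z and every n ≥ 2, ‖K_Z^{n−1}(z,·) − Π_Z(·)‖ ≤ ‖ν_z K*^{(n−2)}(·) − Π*(·)‖, where ν_z is the distribution with Z = z almost surely and X ~ Π_{X|Z}(·|z). -/

import Mathlib

open MeasureTheory ProbabilityTheory

noncomputable def tvDist {E : Type*} [MeasurableSpace E] (μ ν : Measure E) : ℝ :=
  ⨆ A : {A : Set E // MeasurableSet A}, |(μ A.1).toReal - (ν A.1).toReal|

noncomputable def kpow {E : Type*} [MeasurableSpace E] (P : Kernel E E) : ℕ → Kernel E E
  | 0 => Kernel.id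
  | n + 1 => (kpow P n) ∘ₖ P

/-! The kernel `zUpdate : (y, z, x) ↦ z'`, which performs the `Y`- and `Z`-updates of the
out-of-order sampler and keeps only the new `Z`, intertwines the two chains:
`zUpdate ∘ K* = K_Z ∘ zUpdate`. Indeed `K*` is "update `Y`, update `Z`, redraw `X` from
`Π_{X|Z}`", and redrawing `X` from `Π_{X|Z}` followed by `zUpdate` is one step of `K_Z`.
Hence `ν_z K*^{n-2} zUpdate = K_Z^{n-1}(z, ·)` and `Π* zUpdate = Π_Z K_Z = Π_Z`, and the bound
is the contraction of total variation under the Markov kernel `zUpdate`. -/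

open scoped ENNReal

section TotalVariation

variable {α β : Type*} [MeasurableSpace α] [MeasurableSpace β]

lemma tvDist_comm (μ ν : Measure α) : tvDist μ ν = tvDist ν μ := by
  simp only [tvDist, abs_sub_comm]

lemma bddAbove_range_abs_sub_toReal (μ ν : Measure α) [IsFiniteMeasure μ] [IsFiniteMeasure ν] :
    BddAbove (Set.range fun A : {A : Set α // MeasurableSet A} =>
      |(μ A.1).toReal - (ν A.1).toReal|) := by
  refine ⟨max (μ.real Set.univ) (ν.real Set.univ), ?_⟩
  rintro _ ⟨A, rfl⟩
  exact abs_sub_le_of_nonneg_of_le measureReal_nonneg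
    ((measureReal_mono (Set.subset_univ _)).trans (le_max_left _ _)) measureReal_nonneg
    ((measureReal_mono (Set.subset_univ _)).trans (le_max_right _ _))

lemma abs_sub_toReal_le_tvDist (μ ν : Measure α) [IsFiniteMeasure μ] [IsFiniteMeasure ν]
    {A : Set α} (hA : MeasurableSet A) :
    |(μ A).toReal - (ν A).toReal| ≤ tvDist μ ν :=
  le_ciSup (bddAbove_range_abs_sub_toReal μ ν) ⟨A, hA⟩

lemma tvDist_le {μ ν : Measure α} {c : ℝ}
    (h : ∀ A, MeasurableSet A → |(μ A).toReal - (ν A).toReal| ≤ c) :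
    tvDist μ ν ≤ c :=
  have : Nonempty {A : Set α // MeasurableSet A} := ⟨⟨∅, .empty⟩⟩
  ciSup_le fun A => h A.1 A.2

lemma lintegral_le_measure_univ_of_le_one (μ : Measure α) {f : α → ℝ≥0∞} (hf : ∀ a, f a ≤ 1) :
    ∫⁻ a, f a ∂μ ≤ μ Set.univ :=
  (lintegral_mono hf).trans_eq lintegral_one

lemma lintegral_le_lintegral_add_of_restrict_le {μ ν : Measure α} [IsFiniteMeasure ν]
    {s : Set α} (hs : MeasurableSet s) (hνμ : ν.restrict s ≤ μ.restrict s)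
    (hμν : μ.restrict sᶜ ≤ ν.restrict sᶜ) {f : α → ℝ≥0∞} (hf : ∀ a, f a ≤ 1) :
    ∫⁻ a, f a ∂μ ≤ ∫⁻ a, f a ∂ν + (μ s - ν s) := by
  calc ∫⁻ a, f a ∂μ
      = ∫⁻ a, f a ∂(μ.restrict s - ν.restrict s) + ∫⁻ a in s, f a ∂ν + ∫⁻ a in sᶜ, f a ∂μ := by
        rw [← lintegral_add_measure, Measure.sub_add_cancel_of_le hνμ, lintegral_add_compl f hs]
    _ ≤ (μ.restrict s - ν.restrict s) Set.univ + ∫⁻ a in s, f a ∂ν + ∫⁻ a in sᶜ, f a ∂ν := by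
        gcongr
        exact lintegral_le_measure_univ_of_le_one _ hf
    _ = ∫⁻ a, f a ∂ν + (μ s - ν s) := by
        rw [Measure.sub_apply .univ hνμ, Measure.restrict_apply_univ, Measure.restrict_apply_univ,
          ← lintegral_add_compl (μ := ν) f hs]
        ring

lemma toReal_lintegral_sub_le_tvDist (μ ν : Measure α) [IsFiniteMeasure μ] [IsFiniteMeasure ν]
    {f : α → ℝ≥0∞} (hf : ∀ a, f a ≤ 1) :
    (∫⁻ a, f a ∂μ).toReal - (∫⁻ a, f a ∂ν).toReal ≤ tvDist μ ν := by
  obtain ⟨s, hs, hνμ, hμν⟩ := hahn_decomposition μ ν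
  have hνμ' : ν.restrict s ≤ μ.restrict s := Measure.le_iff.2 fun t ht => by
    simpa only [Measure.restrict_apply ht] using hνμ _ (ht.inter hs) Set.inter_subset_right
  have hμν' : μ.restrict sᶜ ≤ ν.restrict sᶜ := Measure.le_iff.2 fun t ht => by
    simpa only [Measure.restrict_apply ht] using hμν _ (ht.inter hs.compl) Set.inter_subset_right
  have hfin (ρ : Measure α) [IsFiniteMeasure ρ] : ∫⁻ a, f a ∂ρ ≠ ∞ :=
    ne_top_of_le_ne_top (measure_ne_top ρ _) (lintegral_le_measure_univ_of_le_one ρ hf)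
  have hsub : μ s - ν s ≠ ∞ := ENNReal.sub_ne_top (measure_ne_top μ s)
  have key := ENNReal.toReal_mono (ENNReal.add_ne_top.2 ⟨hfin ν, hsub⟩)
    (lintegral_le_lintegral_add_of_restrict_le hs hνμ' hμν' hf)
  rw [ENNReal.toReal_add (hfin ν) hsub,
    ENNReal.toReal_sub_of_le (hνμ s hs subset_rfl) (measure_ne_top μ s)] at key
  linarith [le_abs_self ((μ s).toReal - (ν s).toReal), abs_sub_toReal_le_tvDist μ ν hs]

lemma tvDist_comp_le (μ ν : Measure α) [IsFiniteMeasure μ] [IsFiniteMeasure ν]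
    (κ : Kernel α β) [IsMarkovKernel κ] :
    tvDist (κ ∘ₘ μ) (κ ∘ₘ ν) ≤ tvDist μ ν := by
  refine tvDist_le fun A hA => ?_
  rw [Measure.bind_apply hA κ.aemeasurable, Measure.bind_apply hA κ.aemeasurable]
  have hκ (a : α) : κ a A ≤ 1 := prob_le_one
  refine abs_sub_le_iff.2 ⟨toReal_lintegral_sub_le_tvDist μ ν hκ, ?_⟩
  rw [tvDist_comm]
  exact toReal_lintegral_sub_le_tvDist ν μ hκ

end TotalVariation

section KernelComposition

lemma MeasureTheory.Measure.comp_map_eq_comap_comp {α β γ : Type*} [MeasurableSpace α]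
    [MeasurableSpace β] [MeasurableSpace γ] (μ : Measure α) (κ : Kernel β γ) {f : α → β}
    (hf : Measurable f) : κ ∘ₘ μ.map f = κ.comap f hf ∘ₘ μ := by
  rw [← Measure.deterministic_comp_eq_map hf, Measure.comp_assoc,
    Kernel.comp_deterministic_eq_comap]

lemma ProbabilityTheory.Kernel.comp_map_eq_map_of_map_prodMk_eq_compProd
    {Ω α β : Type*} [MeasurableSpace Ω] [MeasurableSpace α] [MeasurableSpace β]
    {P : Measure Ω} {f : Ω → α} {g : Ω → β} (hf : Measurable f) [SFinite (P.map f)]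
    (κ : Kernel α β) [IsSFiniteKernel κ] (h : P.map (fun ω => (f ω, g ω)) = P.map f ⊗ₘ κ) :
    κ ∘ₘ P.map f = P.map g := by
  rw [← Measure.snd_compProd, ← h, Measure.snd_map_prodMk hf]

end KernelComposition

section KernelPower

variable {E F : Type*} [MeasurableSpace E] [MeasurableSpace F]

instance (P : Kernel E E) [IsMarkovKernel P] (n : ℕ) : IsMarkovKernel (kpow P n) := by
  induction n with
  | zero => exact inferInstanceAs (IsMarkovKernel Kernel.id)
  | succ n _ => exact inferInstanceAs (IsMarkovKernel (kpow P n ∘ₖ P))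

lemma comp_kpow_of_comp_eq {P : Kernel E E} {Q : Kernel F F} {L : Kernel E F}
    (h : L ∘ₖ P = Q ∘ₖ L) (n : ℕ) : L ∘ₖ kpow P n = kpow Q n ∘ₖ L := by
  induction n with
  | zero => simp only [kpow, Kernel.comp_id, Kernel.id_comp]
  | succ n ih =>
    calc L ∘ₖ kpow P (n + 1) = L ∘ₖ kpow P n ∘ₖ P := (Kernel.comp_assoc _ _ _).symm
      _ = kpow Q n ∘ₖ (L ∘ₖ P) := by rw [ih, Kernel.comp_assoc]
      _ = kpow Q (n + 1) ∘ₖ L := by rw [h, ← Kernel.comp_assoc]; rfl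

end KernelPower

section BlockGibbs

variable {X Y Z : Type*} [MeasurableSpace X] [MeasurableSpace Y] [MeasurableSpace Z]
  (PXgZ : Kernel Z X) (PYgXZ : Kernel (X × Z) Y) (PZgXY : Kernel (X × Y) Z)

noncomputable def drawX : Kernel (Y × Z) (Y × Z × X) :=
  (Kernel.id ×ₖ PXgZ.comap Prod.snd measurable_snd).map MeasurableEquiv.prodAssoc

noncomputable def drawY : Kernel (Y × Z × X) (X × Y) :=
  Kernel.deterministic (fun p => p.2.2) (by fun_prop) ×ₖ
    PYgXZ.comap (fun p => (p.2.2, p.2.1)) (by fun_prop)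

noncomputable def drawZ : Kernel (X × Y) (Y × Z) :=
  Kernel.deterministic Prod.snd measurable_snd ×ₖ PZgXY

instance [IsMarkovKernel PXgZ] : IsMarkovKernel (drawX (Y := Y) PXgZ) :=
  Kernel.IsMarkovKernel.map _ MeasurableEquiv.prodAssoc.measurable

instance [IsMarkovKernel PYgXZ] : IsMarkovKernel (drawY PYgXZ) := by unfold drawY; infer_instance

instance [IsMarkovKernel PZgXY] : IsMarkovKernel (drawZ PZgXY) := by unfold drawZ; infer_instance

lemma drawX_apply [IsSFiniteKernel PXgZ] (q : Y × Z) :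
    drawX PXgZ q = (PXgZ q.2).map fun x => (q.1, q.2, x) := by
  rw [drawX, Kernel.map_apply _ MeasurableEquiv.prodAssoc.measurable, Kernel.prod_apply,
    Kernel.id_apply, Kernel.comap_apply, Measure.dirac_prod,
    Measure.map_map MeasurableEquiv.prodAssoc.measurable measurable_prodMk_left]
  rfl

lemma drawY_apply [IsSFiniteKernel PYgXZ] (p : Y × Z × X) :
    drawY PYgXZ p = (PYgXZ (p.2.2, p.2.1)).map fun y => (p.2.2, y) := by
  rw [drawY, Kernel.prod_apply, Kernel.deterministic_apply, Kernel.comap_apply, Measure.dirac_prod]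

lemma drawZ_apply [IsSFiniteKernel PZgXY] (r : X × Y) :
    drawZ PZgXY r = (PZgXY r).map fun z => (r.2, z) := by
  rw [drawZ, Kernel.prod_apply, Kernel.deterministic_apply, Measure.dirac_prod]

noncomputable def zUpdate : Kernel (Y × Z × X) Z := PZgXY ∘ₖ drawY PYgXZ

instance [IsMarkovKernel PYgXZ] [IsMarkovKernel PZgXY] :
    IsMarkovKernel (zUpdate PYgXZ PZgXY) := by
  unfold zUpdate; infer_instance

lemma snd_drawZ [IsSFiniteKernel PZgXY] : (drawZ PZgXY).snd = PZgXY := Kernel.snd_prod _ _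

lemma drawY_comp_drawX_apply [IsSFiniteKernel PXgZ] [IsSFiniteKernel PYgXZ]
    {PXYgZ : Kernel Z (X × Y)}
    (hseq : ∀ z, PXYgZ z = (PXgZ z).bind fun x => (PYgXZ (x, z)).map fun y => (x, y))
    (q : Y × Z) : (drawY PYgXZ ∘ₖ drawX PXgZ) q = PXYgZ q.2 := by
  rw [Kernel.comp_apply, drawX_apply, Measure.comp_map_eq_comap_comp _ _ (by fun_prop), hseq]
  congr 1
  funext x
  rw [Kernel.comap_apply, drawY_apply]

lemma zUpdate_comp_drawX [IsSFiniteKernel PXgZ] [IsSFiniteKernel PYgXZ]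
    {PXYgZ : Kernel Z (X × Y)}
    (hseq : ∀ z, PXYgZ z = (PXgZ z).bind fun x => (PYgXZ (x, z)).map fun y => (x, y))
    {KZ : Kernel Z Z} (hKZ : ∀ z, KZ z = (PXYgZ z).bind fun q => PZgXY q) :
    zUpdate PYgXZ PZgXY ∘ₖ drawX PXgZ = KZ ∘ₖ Kernel.deterministic Prod.snd measurable_snd := by
  ext1 q
  rw [zUpdate, Kernel.comp_assoc, Kernel.comp_apply, drawY_comp_drawX_apply PXgZ PYgXZ hseq,
    Kernel.comp_deterministic_eq_comap, Kernel.comap_apply, hKZ]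

lemma eq_drawX_comp_drawZ_comp_drawY [IsSFiniteKernel PXgZ] [IsSFiniteKernel PYgXZ]
    [IsSFiniteKernel PZgXY] {Kstar : Kernel (Y × Z × X) (Y × Z × X)}
    (hKstar : ∀ p : Y × Z × X, Kstar p =
      (PYgXZ (p.2.2, p.2.1)).bind fun y' =>
        (PZgXY (p.2.2, y')).bind fun z' => (PXgZ z').map fun x' => (y', z', x')) :
    Kstar = drawX PXgZ ∘ₖ drawZ PZgXY ∘ₖ drawY PYgXZ := by
  ext1 p
  rw [hKstar, Kernel.comp_apply, drawY_apply, Measure.comp_map_eq_comap_comp _ _ (by fun_prop)]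
  congr 1
  funext y'
  rw [Kernel.comap_apply, Kernel.comp_apply, drawZ_apply,
    Measure.comp_map_eq_comap_comp _ _ (by fun_prop)]
  congr 1
  funext z'
  rw [Kernel.comap_apply, drawX_apply]

lemma zUpdate_comp_eq_comp_zUpdate [IsSFiniteKernel PXgZ] [IsSFiniteKernel PYgXZ]
    [IsSFiniteKernel PZgXY] {PXYgZ : Kernel Z (X × Y)}
    (hseq : ∀ z, PXYgZ z = (PXgZ z).bind fun x => (PYgXZ (x, z)).map fun y => (x, y))
    {KZ : Kernel Z Z} (hKZ : ∀ z, KZ z = (PXYgZ z).bind fun q => PZgXY q)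
    {Kstar : Kernel (Y × Z × X) (Y × Z × X)}
    (hKstar : ∀ p : Y × Z × X, Kstar p =
      (PYgXZ (p.2.2, p.2.1)).bind fun y' =>
        (PZgXY (p.2.2, y')).bind fun z' => (PXgZ z').map fun x' => (y', z', x')) :
    zUpdate PYgXZ PZgXY ∘ₖ Kstar = KZ ∘ₖ zUpdate PYgXZ PZgXY := by
  calc zUpdate PYgXZ PZgXY ∘ₖ Kstar
      = (zUpdate PYgXZ PZgXY ∘ₖ drawX PXgZ) ∘ₖ (drawZ PZgXY ∘ₖ drawY PYgXZ) := by
        rw [eq_drawX_comp_drawZ_comp_drawY PXgZ PYgXZ PZgXY hKstar, Kernel.comp_assoc,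
          Kernel.comp_assoc]
    _ = KZ ∘ₖ ((drawZ PZgXY).snd ∘ₖ drawY PYgXZ) := by
        rw [zUpdate_comp_drawX PXgZ PYgXZ PZgXY hseq hKZ, Kernel.comp_assoc KZ,
          ← Kernel.comp_assoc (Kernel.deterministic _ _), Kernel.deterministic_comp_eq_map,
          ← Kernel.snd_eq]
    _ = KZ ∘ₖ zUpdate PYgXZ PZgXY := by rw [snd_drawZ, zUpdate]

end BlockGibbs

theorem KZ_tv_le_general
    {X Y Z : Type*} [MeasurableSpace X] [MeasurableSpace Y] [MeasurableSpace Z]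
    (Pi : Measure (X × Y × Z)) [IsProbabilityMeasure Pi]
    (PXgZ : Kernel Z X) [IsMarkovKernel PXgZ]
    (PYgXZ : Kernel (X × Z) Y) [IsMarkovKernel PYgXZ]
    (PZgXY : Kernel (X × Y) Z) [IsMarkovKernel PZgXY]
    (PXYgZ : Kernel Z (X × Y)) [IsMarkovKernel PXYgZ]
    (hZgXY : Pi.map (fun p : X × Y × Z => ((p.1, p.2.1), p.2.2)) = (Pi.map fun p : X × Y × Z => (p.1, p.2.1)) ⊗ₘ PZgXY)
    (hXYgZ : Pi.map (fun p : X × Y × Z => (p.2.2, (p.1, p.2.1))) = (Pi.map fun p : X × Y × Z => p.2.2) ⊗ₘ PXYgZ)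
    (hseq : ∀ z : Z, PXYgZ z = (PXgZ z).bind fun x => (PYgXZ (x, z)).map fun y => (x, y))
    (KZ : Kernel Z Z)
    (hKZ : ∀ z : Z, KZ z = (PXYgZ z).bind fun q => PZgXY q)
    (Kstar : Kernel (Y × Z × X) (Y × Z × X))
    (hKstar : ∀ p : Y × Z × X, Kstar p =
      (PYgXZ (p.2.2, p.2.1)).bind fun y' =>
        (PZgXY (p.2.2, y')).bind fun z' =>
          (PXgZ z').map fun x' => (y', z', x'))
    (PiStar : Measure (Y × Z × X))
    (hPiStar : PiStar = (Pi.map fun p : X × Y × Z => (p.2.1, p.2.2)).bind fun q =>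
        (PXgZ q.2).map fun x => (q.1, q.2, x))
    :
    ∀ (z : Z) (y₀ : Y) (n : ℕ), 2 ≤ n →
      tvDist ((kpow KZ (n - 1)) z) (Pi.map fun p : X × Y × Z => p.2.2) ≤
        tvDist (((PXgZ z).map fun x => (y₀, z, x)).bind fun u => (kpow Kstar (n - 2)) u)
          PiStar := by
  have hdrawX := zUpdate_comp_drawX PXgZ PYgXZ PZgXY hseq hKZ
  have hstep := zUpdate_comp_eq_comp_zUpdate PXgZ PYgXZ PZgXY hseq hKZ hKstar
  have : IsMarkovKernel Kstar := by
    rw [eq_drawX_comp_drawZ_comp_drawY PXgZ PYgXZ PZgXY hKstar]; infer_instance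
  have hinv : KZ ∘ₘ Pi.map (fun p => p.2.2) = Pi.map (fun p => p.2.2) := by
    rw [show KZ = PZgXY ∘ₖ PXYgZ from Kernel.ext hKZ, ← Measure.comp_assoc,
      Kernel.comp_map_eq_map_of_map_prodMk_eq_compProd (by fun_prop) _ hXYgZ,
      Kernel.comp_map_eq_map_of_map_prodMk_eq_compProd (by fun_prop) _ hZgXY]
  have hPiStar' : PiStar = drawX PXgZ ∘ₘ Pi.map (fun p => (p.2.1, p.2.2)) := by
    rw [hPiStar]
    congr 1
    funext q
    rw [drawX_apply]
  intro z y₀ n hn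
  obtain ⟨k, rfl⟩ : ∃ k, n = k + 2 := ⟨n - 2, by omega⟩
  have hchain :
      zUpdate PYgXZ PZgXY ∘ₘ (kpow Kstar k ∘ₘ drawX PXgZ (y₀, z)) = kpow KZ (k + 1) z := by
    rw [Measure.comp_assoc, ← Kernel.comp_apply, comp_kpow_of_comp_eq hstep, Kernel.comp_assoc,
      hdrawX, ← Kernel.comp_assoc, Kernel.comp_deterministic_eq_comap, Kernel.comap_apply]
    rfl
  have hstat : zUpdate PYgXZ PZgXY ∘ₘ PiStar = Pi.map (fun p => p.2.2) := by
    rw [hPiStar', Measure.comp_assoc, hdrawX, ← Measure.comp_assoc,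
      Measure.deterministic_comp_eq_map, Measure.map_map (by fun_prop) (by fun_prop)]
    exact hinv
  have : IsFiniteMeasure PiStar := hPiStar' ▸ inferInstance
  rw [show k + 2 - 1 = k + 1 from rfl, show k + 2 - 2 = k from rfl, ← hchain, ← hstat,
    ← drawX_apply PXgZ (y₀, z)]
  exact tvDist_comp_le _ _ _

/-- `‖K_Z^{n-1}(z,·) − Π_Z‖ ≤ ‖ν_z K*^{(n-2)} − Π*‖` for all n ≥ 2. -/
theorem KZ_tv_le
    {X Y Z : Type*} [MeasurableSpace X] [MeasurableSpace Y] [MeasurableSpace Z]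
    (Pi : Measure (X × Y × Z)) [IsProbabilityMeasure Pi]
    (PXgZ : Kernel Z X) [IsMarkovKernel PXgZ]
    (PYgXZ : Kernel (X × Z) Y) [IsMarkovKernel PYgXZ]
    (PZgXY : Kernel (X × Y) Z) [IsMarkovKernel PZgXY]
    (PXYgZ : Kernel Z (X × Y)) [IsMarkovKernel PXYgZ]
    (hXgZ : Pi.map (fun p : X × Y × Z => (p.2.2, p.1)) = (Pi.map fun p : X × Y × Z => p.2.2) ⊗ₘ PXgZ)
    (hYgXZ : Pi.map (fun p : X × Y × Z => ((p.1, p.2.2), p.2.1)) = (Pi.map fun p : X × Y × Z => (p.1, p.2.2)) ⊗ₘ PYgXZ)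
    (hZgXY : Pi.map (fun p : X × Y × Z => ((p.1, p.2.1), p.2.2)) = (Pi.map fun p : X × Y × Z => (p.1, p.2.1)) ⊗ₘ PZgXY)
    (hXYgZ : Pi.map (fun p : X × Y × Z => (p.2.2, (p.1, p.2.1))) = (Pi.map fun p : X × Y × Z => p.2.2) ⊗ₘ PXYgZ)
    (hseq : ∀ z : Z, PXYgZ z = (PXgZ z).bind fun x => (PYgXZ (x, z)).map fun y => (x, y))
    (KZ : Kernel Z Z)
    (hKZ : ∀ z : Z, KZ z = (PXYgZ z).bind fun q => PZgXY q)
    (Kstar : Kernel (Y × Z × X) (Y × Z × X))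
    (hKstar : ∀ p : Y × Z × X, Kstar p =
      (PYgXZ (p.2.2, p.2.1)).bind fun y' =>
        (PZgXY (p.2.2, y')).bind fun z' =>
          (PXgZ z').map fun x' => (y', z', x'))
    (PiStar : Measure (Y × Z × X))
    (hPiStar : PiStar = (Pi.map fun p : X × Y × Z => (p.2.1, p.2.2)).bind fun q =>
        (PXgZ q.2).map fun x => (q.1, q.2, x))
    :
    ∀ (z : Z) (y₀ : Y) (n : ℕ), 2 ≤ n →
      tvDist ((kpow KZ (n - 1)) z) (Pi.map fun p : X × Y × Z => p.2.2) ≤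
        tvDist (((PXgZ z).map fun x => (y₀, z, x)).bind fun u => (kpow Kstar (n - 2)) u)
          PiStar :=
  KZ_tv_le_general Pi PXgZ PYgXZ PZgXY PXYgZ hZgXY hXYgZ hseq KZ hKZ Kstar hKstar PiStar hPiStar
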